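/- Let k be a field of characteristic zero and let A = A₀ ⊕ A₁ be a graded involutive algebra over k with involution τ. If A is simple (A ≠ 0 and the only τ-stable graded ideals of A are 0 and A), then A is either real (A₁ = 0) or complex (A₁ contains an invertible element of A). -/

import Mathlib

/-!
Lemma `inva1` of the paper: a simple graded involutive algebra is either real
(`A₁ = 0`) or complex (`A₁` contains an invertible element).
-/

/-- A (ℤ/2ℤ-)graded algebra over `k`. -/
structure GradedAlgebraStruct (k A : Type*) [CommSemiring k] [CommRing A] [Algebra k A] where
  deg : ZMod 2 → Submodule k A
  one_mem : (1 : A) ∈ deg 0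
  mul_mem : ∀ i j : ZMod 2, ∀ a ∈ deg i, ∀ b ∈ deg j, a * b ∈ deg (i + j)
  isCompl_deg : IsCompl (deg 0) (deg 1)

/-- A graded involutive algebra over `k`: a graded algebra with an involutive
`k`-algebra automorphism preserving the grading. -/
structure GradedInvAlgebraStruct (k A : Type*) [CommSemiring k] [CommRing A] [Algebra k A]
    extends GradedAlgebraStruct k A where
  τ : A ≃ₐ[k] A
  τ_invol : ∀ a : A, τ (τ a) = a
  τ_deg : ∀ i : ZMod 2, ∀ a ∈ deg i, τ a ∈ deg i

/-- An ideal `I` of `A` is graded if each element of `I` decomposes as a sum of its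
even and odd components, both lying in `I`. -/
def GradedAlgebraStruct.IsGradedIdeal {k A : Type*} [CommSemiring k] [CommRing A] [Algebra k A]
    (G : GradedAlgebraStruct k A) (I : Ideal A) : Prop :=
  ∀ x ∈ I, ∃ x₀ ∈ G.deg 0, ∃ x₁ ∈ G.deg 1, x₀ ∈ I ∧ x₁ ∈ I ∧ x = x₀ + x₁

/-- A graded involutive algebra is simple if it is non-zero and its only
τ-stable graded ideals are `0` and `A`. -/
def GradedInvAlgebraStruct.IsSimple {k A : Type*} [CommSemiring k] [CommRing A] [Algebra k A]
    (G : GradedInvAlgebraStruct k A) : Prop :=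
  Nontrivial A ∧ ∀ I : Ideal A, G.toGradedAlgebraStruct.IsGradedIdeal I →
    (∀ x : A, x ∈ I ↔ G.τ x ∈ I) → I = ⊥ ∨ I = ⊤

/-!
If `A₁ ≠ 0`, the ideal generated by `A₁` is graded and `τ`-stable, so by simplicity it is all
of `A`; that is, `A₁` lies in no maximal ideal. An artinian ring has only finitely many maximal
ideals, and a vector space over an infinite field is not a finite union of proper subspaces, so
some element of `A₁` avoids every maximal ideal and is therefore a unit.
-/

theorem Ideal.apply_mem_span_of_mapsTo {R F : Type*} [Semiring R] [FunLike F R R]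
    [RingHomClass F R R] (f : F) {s : Set R} (hs : Set.MapsTo f s s) {x : R}
    (hx : x ∈ Ideal.span s) : f x ∈ Ideal.span s :=
  Ideal.span_mono hs.image_subset (Ideal.map_span f s ▸ Ideal.mem_map_of_mem f hx)

theorem Submodule.exists_isUnit_of_span_eq_top {k A : Type*} [Field k] [Infinite k]
    [CommRing A] [Algebra k A] (hfin : {m : Ideal A | m.IsMaximal}.Finite)
    {V : Submodule k A} (hV : Ideal.span (V : Set A) = ⊤) : ∃ a ∈ V, IsUnit a := by
  by_contra! hnonunit
  have : Finite {m : Ideal A // m.IsMaximal} := hfin.to_subtype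
  obtain ⟨⟨m, hm⟩, htop⟩ := Subspace.exists_eq_top_of_iUnion_eq_univ
      (p := fun m : {m : Ideal A // m.IsMaximal} => (m.1.restrictScalars k).comap V.subtype) <| by
    refine Set.eq_univ_of_forall fun v => Set.mem_iUnion.mpr ?_
    obtain ⟨m, hm, hvm⟩ := exists_max_ideal_of_mem_nonunits (hnonunit v v.2)
    exact ⟨⟨m, hm⟩, hvm⟩
  have hVm : Ideal.span (V : Set A) ≤ m := Ideal.span_le.mpr fun v hv =>
    (htop ▸ Submodule.mem_top : (⟨v, hv⟩ : V) ∈ (m.restrictScalars k).comap V.subtype)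
  exact hm.ne_top (top_le_iff.mp (hV ▸ hVm))

namespace GradedAlgebraStruct

variable {k A : Type*} [CommSemiring k] [CommRing A] [Algebra k A] (G : GradedAlgebraStruct k A)

theorem exists_add_eq (a : A) : ∃ a₀ ∈ G.deg 0, ∃ a₁ ∈ G.deg 1, a₀ + a₁ = a :=
  Submodule.mem_sup.mp (G.isCompl_deg.sup_eq_top ▸ Submodule.mem_top)

theorem mul_mem_of_add_eq {i j l : ZMod 2} (hl : i + j = l) {a b : A} (ha : a ∈ G.deg i)
    (hb : b ∈ G.deg j) : a * b ∈ G.deg l :=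
  hl ▸ G.mul_mem i j a ha b hb

theorem isGradedIdeal_span_of_homogeneous {s : Set A}
    (hs : ∀ x ∈ s, x ∈ G.deg 0 ∨ x ∈ G.deg 1) : G.IsGradedIdeal (Ideal.span s) := by
  intro x hx
  induction hx using Submodule.span_induction with
  | mem x hx =>
    rcases hs x hx with hx₀ | hx₁
    · exact ⟨x, hx₀, 0, zero_mem _, Ideal.subset_span hx, zero_mem _, (add_zero x).symm⟩
    · exact ⟨0, zero_mem _, x, hx₁, zero_mem _, Ideal.subset_span hx, (zero_add x).symm⟩
  | zero => exact ⟨0, zero_mem _, 0, zero_mem _, zero_mem _, zero_mem _, (add_zero 0).symm⟩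
  | add x y _ _ hx hy =>
    obtain ⟨x₀, hx₀, x₁, hx₁, hx₀I, hx₁I, rfl⟩ := hx
    obtain ⟨y₀, hy₀, y₁, hy₁, hy₀I, hy₁I, rfl⟩ := hy
    exact ⟨x₀ + y₀, add_mem hx₀ hy₀, x₁ + y₁, add_mem hx₁ hy₁, add_mem hx₀I hy₀I,
      add_mem hx₁I hy₁I, by abel⟩
  | smul a x _ hx =>
    obtain ⟨x₀, hx₀, x₁, hx₁, hx₀I, hx₁I, rfl⟩ := hx
    obtain ⟨a₀, ha₀, a₁, ha₁, rfl⟩ := G.exists_add_eq a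
    refine ⟨a₀ * x₀ + a₁ * x₁, add_mem (G.mul_mem_of_add_eq (by decide) ha₀ hx₀)
        (G.mul_mem_of_add_eq (by decide) ha₁ hx₁),
      a₀ * x₁ + a₁ * x₀, add_mem (G.mul_mem_of_add_eq (by decide) ha₀ hx₁)
        (G.mul_mem_of_add_eq (by decide) ha₁ hx₀),
      add_mem (Ideal.mul_mem_left _ _ hx₀I) (Ideal.mul_mem_left _ _ hx₁I),
      add_mem (Ideal.mul_mem_left _ _ hx₁I) (Ideal.mul_mem_left _ _ hx₀I), ?_⟩
    rw [smul_eq_mul]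
    ring

end GradedAlgebraStruct

theorem GradedInvAlgebraStruct.mem_span_deg_iff_τ_mem {k A : Type*} [CommSemiring k]
    [CommRing A] [Algebra k A] (G : GradedInvAlgebraStruct k A) (i : ZMod 2) (x : A) :
    x ∈ Ideal.span (G.deg i : Set A) ↔ G.τ x ∈ Ideal.span (G.deg i : Set A) := by
  have hτ : ∀ y ∈ Ideal.span (G.deg i : Set A), G.τ y ∈ Ideal.span (G.deg i : Set A) :=
    fun y => Ideal.apply_mem_span_of_mapsTo G.τ (G.τ_deg i)
  exact ⟨hτ x, fun h => G.τ_invol x ▸ hτ _ h⟩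

theorem simple_gradedInvAlgebra_real_or_complex_general
    {k A : Type*} [Field k] [CharZero k]
    [CommRing A] [Algebra k A] [FiniteDimensional k A]
    (G : GradedInvAlgebraStruct k A) (hs : G.IsSimple) :
    G.deg 1 = ⊥ ∨ ∃ a ∈ G.deg 1, IsUnit a := by
  refine or_iff_not_imp_left.mpr fun hne => ?_
  have hspan : Ideal.span (G.deg 1 : Set A) = ⊤ := by
    refine (hs.2 _ (G.isGradedIdeal_span_of_homogeneous fun _ => Or.inr)
      (G.mem_span_deg_iff_τ_mem 1)).resolve_left fun hbot => hne ?_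
    rw [Ideal.span_eq_bot] at hbot
    exact (Submodule.eq_bot_iff _).mpr hbot
  have : IsArtinianRing A := isArtinian_of_tower k inferInstance
  exact (G.deg 1).exists_isUnit_of_span_eq_top (IsArtinianRing.setOfPred_isMaximal_finite A) hspan

theorem simple_gradedInvAlgebra_real_or_complex
    {k A : Type*} [Field k] [CharZero k]
    [CommRing A] [Algebra k A] [FiniteDimensional k A] [IsSemisimpleRing A]
    (G : GradedInvAlgebraStruct k A) (hs : G.IsSimple) :
    G.deg 1 = ⊥ ∨ ∃ a ∈ G.deg 1, IsUnit a :=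
  simple_gradedInvAlgebra_real_or_complex_general G hs
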